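/- arXiv:2001.00156 — 17 statements merged into one kernel-verified Lean document; each statement's English description precedes it below -/
import Mathlib

section
/- Let P be a countable cancellative monoid and let T : P → B(H) be the family of truncated shift operators on H = ℓ²(Δ), i.e. a family of bounded linear operators satisfying T_p δ_{(a,x)} = δ_{(a,px)} whenever (a,px) ∈ Δ and T_p δ_{(a,x)} = 0 otherwise, for all p ∈ P and (a,x) ∈ Δ. Then T_p ∘ T_q = T_{pq} for all p, q ∈ P. -/
/-- `Δ = {(bx, x) : b, x ∈ P}`. -/
def Delta (P : Type*) [Monoid P] : Set (P × P) := {γ | ∃ b x : P, γ = (b * x, x)}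

/-- The standard orthonormal basis vector `δ_γ` of `ℓ²(Δ)`. -/
noncomputable def deltaBasis (P : Type*) [Monoid P] (γ : Delta P) :
    lp (fun _ : Delta P => ℂ) 2 :=
  letI := Classical.decEq (Delta P)
  lp.single 2 γ 1

/-- `T : P → B(ℓ²(Δ))` is the family of truncated shift operators:
`T_p δ_{(a,x)} = δ_{(a,px)}` whenever `(a,px) ∈ Δ`, and `T_p δ_{(a,x)} = 0` otherwise. -/
def IsTruncShift (P : Type*) [Monoid P]
    (T : P → (lp (fun _ : Delta P => ℂ) 2 →L[ℂ] lp (fun _ : Delta P => ℂ) 2)) : Prop :=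
  ∀ (p : P) (γ : Delta P),
    (∀ h : ((γ : P × P).1, p * (γ : P × P).2) ∈ Delta P,
      T p (deltaBasis P γ) = deltaBasis P ⟨((γ : P × P).1, p * (γ : P × P).2), h⟩) ∧
    (((γ : P × P).1, p * (γ : P × P).2) ∉ Delta P → T p (deltaBasis P γ) = 0)

/-- Two continuous linear maps on `ℓ²(Δ)` agreeing on the basis vectors are equal. -/
theorem clm_ext_deltaBasis {P : Type*} [Monoid P]
    (A B : lp (fun _ : Delta P => ℂ) 2 →L[ℂ] lp (fun _ : Delta P => ℂ) 2)
    (h : ∀ γ, A (deltaBasis P γ) = B (deltaBasis P γ)) : A = B := by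
  classical
  refine ContinuousLinearMap.ext fun f => ?_
  have hs := lp.hasSum_single (E := fun _ : Delta P => ℂ) (p := 2) (by norm_num) f
  have e : ∀ γ : Delta P, deltaBasis P γ = lp.single 2 γ 1 := by
    intro γ
    rw [deltaBasis]
    congr!
  have key : ∀ γ : Delta P, lp.single 2 γ (f γ) = f γ • deltaBasis P γ := by
    intro γ
    rw [e, ← lp.single_smul, smul_eq_mul, mul_one]
  have hA := hs.mapL A
  have hB := hs.mapL B
  refine hA.unique (HasSum.congr_fun hB ?_)
  intro γ
  simp only [key, map_smul, h]

/-- For a countable cancellative monoid `P`, the truncated shift operators satisfy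
`T_p ∘ T_q = T_{pq}` for all `p, q ∈ P`. -/
theorem truncShift_mul {P : Type*} [CancelMonoid P] [Countable P]
    (T : P → (lp (fun _ : Delta P => ℂ) 2 →L[ℂ] lp (fun _ : Delta P => ℂ) 2))
    (hT : IsTruncShift P T) :
    ∀ p q : P, (T p).comp (T q) = T (p * q) := by
  intro p q
  apply clm_ext_deltaBasis
  intro γ
  by_cases hq : ((γ : P × P).1, q * (γ : P × P).2) ∈ Delta P
  · have h1 : T q (deltaBasis P γ) = deltaBasis P ⟨((γ : P × P).1, q * (γ : P × P).2), hq⟩ :=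
      (hT q γ).1 hq
    by_cases hp : ((γ : P × P).1, p * (q * (γ : P × P).2)) ∈ Delta P
    · have h2 := (hT p ⟨((γ : P × P).1, q * (γ : P × P).2), hq⟩).1 hp
      have h3 : ((γ : P × P).1, (p * q) * (γ : P × P).2) ∈ Delta P := by
        simpa [mul_assoc] using hp
      have h4 := (hT (p * q) γ).1 h3
      simp only [ContinuousLinearMap.comp_apply, h1, h2, h4]
      congr 1
      simp [mul_assoc]
    · have h2 := (hT p ⟨((γ : P × P).1, q * (γ : P × P).2), hq⟩).2 hp
      have h3 : ((γ : P × P).1, (p * q) * (γ : P × P).2) ∉ Delta P := by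
        simpa [mul_assoc] using hp
      have h4 := (hT (p * q) γ).2 h3
      simp only [ContinuousLinearMap.comp_apply, h1, h2, h4]
  · have h1 := (hT q γ).2 hq
    have h3 : ((γ : P × P).1, (p * q) * (γ : P × P).2) ∉ Delta P := by
      intro hc
      apply hq
      obtain ⟨b, y, hy⟩ := hc
      obtain ⟨h5, h6⟩ := Prod.mk.injEq .. ▸ hy
      refine ⟨b * p, q * (↑γ : P × P).2, ?_⟩
      have h7 : (↑γ : P × P).1 = b * p * (q * (↑γ : P × P).2) := by
        rw [h5, ← h6, mul_assoc, mul_assoc]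
      exact Prod.ext_iff.mpr ⟨h7, rfl⟩
    have h4 := (hT (p * q) γ).2 h3
    simp [ContinuousLinearMap.comp_apply, h1, h4]
end

section
/- Let P be a countable cancellative monoid and let T : P → B(H) be the family of truncated shift operators on H = ℓ²(Δ), i.e. a family of bounded linear operators satisfying T_p δ_{(a,x)} = δ_{(a,px)} whenever (a,px) ∈ Δ and T_p δ_{(a,x)} = 0 otherwise, for all p ∈ P and (a,x) ∈ Δ. Then each T_p is a partial isometry; that is, T_p ∘ (T_p)* ∘ T_p = T_p for every p ∈ P, where (T_p)* denotes the Hilbert-space adjoint of T_p. -/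
/-! `T_p` maps each basis vector `δ_(a,x)` either to the basis vector `δ_(a,px)` or to `0`, and by
left cancellation no two basis vectors go to the same one. An operator acting on a Hilbert basis
as such a partial injection has as adjoint the inverse partial injection, so `T_p* T_p` fixes every
`δ_γ` that `T_p` does not kill, and `T_p T_p* T_p = T_p` on the basis. -/

namespace HilbertBasis

variable {ι 𝕜 E : Type*} [RCLike 𝕜] [NormedAddCommGroup E] [InnerProductSpace 𝕜 E]

theorem ext_continuousLinearMap {F : Type*} [AddCommMonoid F] [Module 𝕜 F] [TopologicalSpace F]
    [T2Space F] (b : HilbertBasis ι 𝕜 E) {f g : E →L[𝕜] F} (h : ∀ i, f (b i) = g (b i)) :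
    f = g :=
  ContinuousLinearMap.ext_on (Submodule.dense_iff_topologicalClosure_eq_top.2 b.dense_span)
    (Set.forall_mem_range.2 h)

section PartialPermutation

variable [CompleteSpace E] (b : HilbertBasis ι 𝕜 E) {A : E →L[𝕜] E} {S : Set ι} {σ : S → ι}

theorem adjoint_apply_of_apply_eq (hσ : σ.Injective) (hS : ∀ i : S, A (b i) = b (σ i))
    (hSc : ∀ i ∉ S, A (b i) = 0) (i : S) : A.adjoint (b (σ i)) = b i := by
  classical
  refine b.repr.injective (lp.ext (funext fun j => ?_))
  rw [b.repr_apply_apply, b.repr_apply_apply, ContinuousLinearMap.adjoint_inner_right]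
  by_cases hj : j ∈ S
  · rw [hS ⟨j, hj⟩, orthonormal_iff_ite.1 b.orthonormal, orthonormal_iff_ite.1 b.orthonormal,
      hσ.eq_iff, Subtype.ext_iff]
  · have hji : j ≠ i := fun h => hj (h ▸ i.2)
    rw [hSc j hj, inner_zero_left, b.orthonormal.inner_eq_zero hji]

theorem comp_adjoint_comp_self_of_apply_eq (hσ : σ.Injective) (hS : ∀ i : S, A (b i) = b (σ i))
    (hSc : ∀ i ∉ S, A (b i) = 0) : A.comp (A.adjoint.comp A) = A := by
  refine b.ext_continuousLinearMap fun i => ?_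
  by_cases hi : i ∈ S
  · simp only [ContinuousLinearMap.comp_apply, hS ⟨i, hi⟩, b.adjoint_apply_of_apply_eq hσ hS hSc]
  · simp only [ContinuousLinearMap.comp_apply, hSc i hi, map_zero]

end PartialPermutation

end HilbertBasis

noncomputable def deltaHilbertBasis (P : Type*) [Monoid P] :
    HilbertBasis (Delta P) ℂ (lp (fun _ : Delta P => ℂ) 2) :=
  default

theorem coe_deltaHilbertBasis (P : Type*) [Monoid P] : ⇑(deltaHilbertBasis P) = deltaBasis P :=
  rfl

theorem truncShift_partialIsometry_general {P : Type*} [CancelMonoid P]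
    (T : P → (lp (fun _ : Delta P => ℂ) 2 →L[ℂ] lp (fun _ : Delta P => ℂ) 2))
    (hT : IsTruncShift P T) :
    ∀ p : P, (T p).comp ((ContinuousLinearMap.adjoint (T p)).comp (T p)) = T p := by
  intro p
  let S : Set (Delta P) := {γ | ((γ : P × P).1, p * (γ : P × P).2) ∈ Delta P}
  let σ : S → Delta P := fun γ => ⟨((γ : P × P).1, p * (γ : P × P).2), γ.2⟩
  have hσ : σ.Injective := by
    rintro ⟨⟨⟨a, x⟩, _⟩, _⟩ ⟨⟨⟨a', x'⟩, _⟩, _⟩ h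
    simp only [σ, Subtype.mk.injEq, Prod.mk.injEq, mul_right_inj] at h
    obtain ⟨rfl, rfl⟩ := h
    rfl
  refine (deltaHilbertBasis P).comp_adjoint_comp_self_of_apply_eq hσ (fun γ => ?_) fun γ hγ => ?_
  · rw [coe_deltaHilbertBasis]; exact (hT p γ).1 γ.2
  · rw [coe_deltaHilbertBasis]; exact (hT p γ).2 hγ

/-- For a countable cancellative monoid `P`, each truncated shift operator `T_p` is a
partial isometry: `T_p ∘ (T_p)* ∘ T_p = T_p`. -/
theorem truncShift_partialIsometry {P : Type*} [CancelMonoid P] [Countable P]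
    (T : P → (lp (fun _ : Delta P => ℂ) 2 →L[ℂ] lp (fun _ : Delta P => ℂ) 2))
    (hT : IsTruncShift P T) :
    ∀ p : P, (T p).comp ((ContinuousLinearMap.adjoint (T p)).comp (T p)) = T p :=
  truncShift_partialIsometry_general T hT
end

section
/- Let P be a cancellative monoid. For p, q ∈ P, the subsets Δ_p and Δ_q of P × P are equal if and only if pP = qP. -/
/-- The principal right ideal `pP = {pq : q ∈ P}`. -/
def rIdeal (P : Type*) [Monoid P] (p : P) : Set P := {y | ∃ x, y = p * x}

/-- The principal left ideal `Pp = {qp : q ∈ P}`. -/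
def lIdeal (P : Type*) [Monoid P] (p : P) : Set P := {y | ∃ x, y = x * p}

/-- `Δ_p = {(bpx, px) : b, x ∈ P}`. -/
def DeltaLow (P : Type*) [Monoid P] (p : P) : Set (P × P) :=
  {γ | ∃ b x : P, γ = (b * p * x, p * x)}

/-- `Δ^p = {(bpx, x) : b, x ∈ P}`. -/
def DeltaHigh (P : Type*) [Monoid P] (p : P) : Set (P × P) :=
  {γ | ∃ b x : P, γ = (b * p * x, x)}

private lemma mem_rIdeal_of_deltaLow {P : Type*} [CancelMonoid P] {p q : P}
    (h : DeltaLow P p ⊆ DeltaLow P q) : p ∈ rIdeal P q := by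
  have hp : (p, p) ∈ DeltaLow P p := ⟨1, 1, by simp⟩
  obtain ⟨b, x, hbx⟩ := h hp
  have h1 : p = b * q * x := (Prod.ext_iff.mp hbx).1
  have h2 : p = q * x := (Prod.ext_iff.mp hbx).2
  exact ⟨x, h2⟩

private lemma deltaLow_subset {P : Type*} [CancelMonoid P] {p q : P}
    (h : p ∈ rIdeal P q) : DeltaLow P p ⊆ DeltaLow P q := by
  obtain ⟨a, ha⟩ := h
  rintro ⟨y, z⟩ ⟨b, x, hbx⟩
  refine ⟨b, a * x, ?_⟩
  rw [hbx, ha]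
  simp [mul_assoc]

/-- For a cancellative monoid `P` and `p, q ∈ P`: `Δ_p = Δ_q` iff `pP = qP`. -/
theorem deltaLow_eq_iff {P : Type*} [CancelMonoid P] (p q : P) :
    DeltaLow P p = DeltaLow P q ↔ rIdeal P p = rIdeal P q := by
  constructor
  · intro h
    obtain ⟨x, hx⟩ := mem_rIdeal_of_deltaLow h.le
    obtain ⟨y, hy⟩ := mem_rIdeal_of_deltaLow h.ge
    ext z
    constructor
    · rintro ⟨w, rfl⟩; exact ⟨x * w, by rw [hx, mul_assoc]⟩
    · rintro ⟨w, rfl⟩; exact ⟨y * w, by rw [hy, mul_assoc]⟩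
  · intro h
    exact le_antisymm (deltaLow_subset (h ▸ ⟨1, (mul_one p).symm⟩))
      (deltaLow_subset (h ▸ ⟨1, (mul_one q).symm⟩))
end

section
/- Let P be a cancellative monoid. For p, q ∈ P, the subsets Δ^p and Δ^q of P × P are equal if and only if Pp = Pq. -/
/-- For a cancellative monoid `P` and `p, q ∈ P`: `Δ^p = Δ^q` iff `Pp = Pq`. -/
theorem deltaHigh_eq_iff {P : Type*} [CancelMonoid P] (p q : P) :
    DeltaHigh P p = DeltaHigh P q ↔ lIdeal P p = lIdeal P q := by
  constructor
  · intro h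
    have hp : (p, 1) ∈ DeltaHigh P q := h ▸ ⟨1, 1, by simp⟩
    have hq : (q, 1) ∈ DeltaHigh P p := h.symm ▸ ⟨1, 1, by simp⟩
    obtain ⟨b, x, hbx⟩ := hp
    obtain ⟨c, y, hcy⟩ := hq
    simp only [Prod.mk.injEq] at hbx hcy
    ext z
    constructor
    · rintro ⟨w, rfl⟩
      exact ⟨w * b, by rw [hbx.1, ← hbx.2, mul_one, mul_assoc]⟩
    · rintro ⟨w, rfl⟩
      exact ⟨w * c, by rw [hcy.1, ← hcy.2, mul_one, mul_assoc]⟩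
  · intro h
    have hp : p ∈ lIdeal P q := h ▸ ⟨1, by simp⟩
    have hq : q ∈ lIdeal P p := h.symm ▸ ⟨1, by simp⟩
    obtain ⟨b, hb⟩ := hp
    obtain ⟨c, hc⟩ := hq
    apply le_antisymm
    · rintro γ ⟨a, x, rfl⟩
      exact ⟨a * b, x, by rw [hb, ← mul_assoc]⟩
    · rintro γ ⟨a, x, rfl⟩
      exact ⟨a * c, x, by rw [hc, ← mul_assoc]⟩
end

section
/- Let P be a cancellative monoid and let p, q, r ∈ P. If pP ∩ qP = rP then Δ_p ∩ Δ_q = Δ_r, and if pP ∩ qP = ∅ then Δ_p ∩ Δ_q = ∅. -/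
/-- For a cancellative monoid `P` and `p, q, r ∈ P`: if `pP ∩ qP = rP` then
`Δ_p ∩ Δ_q = Δ_r`, and if `pP ∩ qP = ∅` then `Δ_p ∩ Δ_q = ∅`. -/
theorem deltaLow_inter {P : Type*} [CancelMonoid P] (p q r : P) :
    (rIdeal P p ∩ rIdeal P q = rIdeal P r → DeltaLow P p ∩ DeltaLow P q = DeltaLow P r) ∧
    (rIdeal P p ∩ rIdeal P q = ∅ → DeltaLow P p ∩ DeltaLow P q = ∅) := by
  constructor
  · intro h
    ext ⟨u, v⟩
    constructor
    · rintro ⟨⟨b, x, hbx⟩, ⟨c, y, hcy⟩⟩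
      obtain ⟨hu, hv⟩ := Prod.mk.injEq .. ▸ hbx
      obtain ⟨hu', hv'⟩ := Prod.mk.injEq .. ▸ hcy
      have hmem : v ∈ rIdeal P r := by
        rw [← h]; exact ⟨⟨x, hv⟩, ⟨y, hv'⟩⟩
      obtain ⟨z, hz⟩ := hmem
      refine ⟨b, z, ?_⟩
      rw [Prod.mk.injEq]
      exact ⟨by rw [hu, mul_assoc, ← hv, hz, ← mul_assoc], hz⟩
    · rintro ⟨b, z, hbz⟩
      obtain ⟨hu, hv⟩ := Prod.mk.injEq .. ▸ hbz
      have hmem : v ∈ rIdeal P p ∩ rIdeal P q := by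
        rw [h]; exact ⟨z, hv⟩
      obtain ⟨⟨x, hx⟩, ⟨y, hy⟩⟩ := hmem
      refine ⟨⟨b, x, ?_⟩, ⟨b, y, ?_⟩⟩
      · rw [Prod.mk.injEq]
        exact ⟨by rw [hu, mul_assoc, ← hv, hx, ← mul_assoc], hx⟩
      · rw [Prod.mk.injEq]
        exact ⟨by rw [hu, mul_assoc, ← hv, hy, ← mul_assoc], hy⟩
  · intro h
    ext ⟨u, v⟩
    simp only [Set.mem_empty_iff_false, iff_false]
    rintro ⟨⟨b, x, hbx⟩, ⟨c, y, hcy⟩⟩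
    obtain ⟨hu, hv⟩ := Prod.mk.injEq .. ▸ hbx
    obtain ⟨hu', hv'⟩ := Prod.mk.injEq .. ▸ hcy
    have : v ∈ rIdeal P p ∩ rIdeal P q := ⟨⟨x, hv⟩, ⟨y, hv'⟩⟩
    rw [h] at this
    exact this
end

section
/- Let P be a cancellative monoid and let p, q, r ∈ P. If Pp ∩ Pq = Pr then Δ^p ∩ Δ^q = Δ^r, and if Pp ∩ Pq = ∅ then Δ^p ∩ Δ^q = ∅. -/
lemma mem_deltaHigh_iff {P : Type*} [Monoid P] (p : P) (γ : P × P) :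
    γ ∈ DeltaHigh P p ↔ ∃ a ∈ lIdeal P p, γ.1 = a * γ.2 := by
  constructor
  · rintro ⟨b, x, rfl⟩
    exact ⟨b * p, ⟨b, rfl⟩, rfl⟩
  · rintro ⟨a, ⟨b, rfl⟩, h⟩
    exact ⟨b, γ.2, Prod.ext h rfl⟩

/-- For a cancellative monoid `P` and `p, q, r ∈ P`: if `Pp ∩ Pq = Pr` then
`Δ^p ∩ Δ^q = Δ^r`, and if `Pp ∩ Pq = ∅` then `Δ^p ∩ Δ^q = ∅`. -/
theorem deltaHigh_inter {P : Type*} [CancelMonoid P] (p q r : P) :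
    (lIdeal P p ∩ lIdeal P q = lIdeal P r → DeltaHigh P p ∩ DeltaHigh P q = DeltaHigh P r) ∧
    (lIdeal P p ∩ lIdeal P q = ∅ → DeltaHigh P p ∩ DeltaHigh P q = ∅) := by
  have key : ∀ γ : P × P, γ ∈ DeltaHigh P p ∩ DeltaHigh P q ↔
      ∃ a ∈ lIdeal P p ∩ lIdeal P q, γ.1 = a * γ.2 := by
    intro γ
    constructor
    · rintro ⟨hp, hq⟩
      obtain ⟨a, ha, h1⟩ := (mem_deltaHigh_iff p γ).1 hp
      obtain ⟨b, hb, h2⟩ := (mem_deltaHigh_iff q γ).1 hq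
      have : a = b := mul_right_cancel (h1 ▸ h2)
      exact ⟨a, ⟨ha, this ▸ hb⟩, h1⟩
    · rintro ⟨a, ⟨ha, hb⟩, h⟩
      exact ⟨(mem_deltaHigh_iff p γ).2 ⟨a, ha, h⟩, (mem_deltaHigh_iff q γ).2 ⟨a, hb, h⟩⟩
  constructor
  · intro h
    ext γ
    rw [key γ, mem_deltaHigh_iff r γ, h]
  · intro h
    ext γ
    simp only [Set.mem_empty_iff_false, iff_false]
    intro hγ
    obtain ⟨a, ha, -⟩ := (key γ).1 hγ
    rw [h] at ha
    exact ha
end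

section
/- Let P be an LCM monoid and let p, q, r ∈ P. If Pr ∩ Pq = Pk for some k ∈ P with r₁r = q₁q = k (r₁, q₁ ∈ P), then (Δ_p ∩ Δ^q)_r = Δ_{rp} ∩ Δ^{r₁}. If Pr ∩ Pq = ∅, then (Δ_p ∩ Δ^q)_r = ∅. -/
/-- `P` is an LCM monoid (given it is cancellative): the intersection of two principal
right ideals is empty or principal, and likewise for principal left ideals. -/
def IsLCMMonoid (P : Type*) [Monoid P] : Prop :=
  (∀ p q : P, rIdeal P p ∩ rIdeal P q = ∅ ∨ ∃ r, rIdeal P p ∩ rIdeal P q = rIdeal P r) ∧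
  (∀ p q : P, lIdeal P p ∩ lIdeal P q = ∅ ∨ ∃ r, lIdeal P p ∩ lIdeal P q = lIdeal P r)

/-- `Y_p = {(bpx, px) : (bpx, x) ∈ Y}`. -/
def subOp (P : Type*) [Monoid P] (Y : Set (P × P)) (p : P) : Set (P × P) :=
  {γ | ∃ b x : P, (b * p * x, x) ∈ Y ∧ γ = (b * p * x, p * x)}

/-- `Y^p = {(bpx, x) : (bpx, px) ∈ Y}`. -/
def supOp (P : Type*) [Monoid P] (Y : Set (P × P)) (p : P) : Set (P × P) :=
  {γ | ∃ b x : P, (b * p * x, p * x) ∈ Y ∧ γ = (b * p * x, x)}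

/-- Let `P` be an LCM monoid and `p, q, r ∈ P`. If `Pr ∩ Pq = Pk` with `r₁r = q₁q = k`,
then `(Δ_p ∩ Δ^q)_r = Δ_{rp} ∩ Δ^{r₁}`; if `Pr ∩ Pq = ∅`, then `(Δ_p ∩ Δ^q)_r = ∅`. -/
theorem subOp_deltaLow_inter_deltaHigh {P : Type*} [CancelMonoid P] (hP : IsLCMMonoid P)
    (p q r : P) :
    (∀ k r₁ q₁ : P, lIdeal P r ∩ lIdeal P q = lIdeal P k → r₁ * r = k → q₁ * q = k →
      subOp P (DeltaLow P p ∩ DeltaHigh P q) r = DeltaLow P (r * p) ∩ DeltaHigh P r₁) ∧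
    (lIdeal P r ∩ lIdeal P q = ∅ →
      subOp P (DeltaLow P p ∩ DeltaHigh P q) r = ∅) := by
  constructor
  · intro k r₁ q₁ hI hr hq
    ext ⟨u, v⟩
    simp only [subOp, DeltaLow, DeltaHigh, Set.mem_setOf_eq, Set.mem_inter_iff, Prod.mk.injEq]
    constructor
    · rintro ⟨b, x, ⟨⟨b', x', h1, h2⟩, ⟨b'', x'', h3, h4⟩⟩, rfl, rfl⟩
      subst h4
      have hbr : b * r = b'' * q := mul_right_cancel h3
      have hmem : b * r ∈ lIdeal P k := by
        rw [← hI]; exact ⟨⟨b, rfl⟩, ⟨b'', hbr⟩⟩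
      obtain ⟨m, hm⟩ := hmem
      rw [← hr, ← mul_assoc] at hm
      have hb : b = m * r₁ := mul_right_cancel hm
      subst h2
      refine ⟨⟨b, x', ?_, ?_⟩, ⟨m, r * (p * x'), ?_, rfl⟩⟩
      · simp [mul_assoc]
      · simp [mul_assoc]
      · rw [hb]; simp [mul_assoc]
    · rintro ⟨⟨c, y, h1, h2⟩, ⟨d, z, h3, h4⟩⟩
      subst h4
      rw [h2] at h3
      have h5 : c * (r * p) * y = d * r₁ * (r * p) * y := by
        rw [h1, ← mul_assoc (d * r₁) (r * p) y] at h3; exact h3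
      have hc : c = d * r₁ := mul_right_cancel (mul_right_cancel h5)
      refine ⟨c, p * y, ⟨⟨c * r, y, ?_, ?_⟩, ⟨d * q₁, p * y, ?_, rfl⟩⟩, ?_, ?_⟩
      · simp [mul_assoc]
      · rfl
      · rw [hc, mul_assoc d r₁ r, hr, mul_assoc d q₁ q, hq]
      · rw [h1]; simp [mul_assoc]
      · rw [h2]; simp [mul_assoc]
  · intro hE
    ext ⟨u, v⟩
    simp only [subOp, DeltaLow, DeltaHigh, Set.mem_setOf_eq, Set.mem_inter_iff, Prod.mk.injEq,
      Set.mem_empty_iff_false, iff_false]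
    rintro ⟨b, x, ⟨⟨b', x', h1, h2⟩, ⟨b'', x'', h3, h4⟩⟩, rfl, rfl⟩
    subst h4
    have hbr : b * r = b'' * q := mul_right_cancel h3
    have : b * r ∈ lIdeal P r ∩ lIdeal P q := ⟨⟨b, rfl⟩, ⟨b'', hbr⟩⟩
    rw [hE] at this
    exact this
end

section
/- Let P be an LCM monoid and let p, q, r ∈ P. If pP ∩ rP = kP for some k ∈ P with pp₁ = rr₁ = k (p₁, r₁ ∈ P), then (Δ_p ∩ Δ^q)^r = Δ_{r₁} ∩ Δ^{qr}. If pP ∩ rP = ∅, then (Δ_p ∩ Δ^q)^r = ∅. -/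
/-- Let `P` be an LCM monoid and `p, q, r ∈ P`. If `pP ∩ rP = kP` with `pp₁ = rr₁ = k`,
then `(Δ_p ∩ Δ^q)^r = Δ_{r₁} ∩ Δ^{qr}`; if `pP ∩ rP = ∅`, then `(Δ_p ∩ Δ^q)^r = ∅`. -/
theorem supOp_deltaLow_inter_deltaHigh {P : Type*} [CancelMonoid P] (hP : IsLCMMonoid P)
    (p q r : P) :
    (∀ k p₁ r₁ : P, rIdeal P p ∩ rIdeal P r = rIdeal P k → p * p₁ = k → r * r₁ = k →
      supOp P (DeltaLow P p ∩ DeltaHigh P q) r = DeltaLow P r₁ ∩ DeltaHigh P (q * r)) ∧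
    (rIdeal P p ∩ rIdeal P r = ∅ →
      supOp P (DeltaLow P p ∩ DeltaHigh P q) r = ∅) := by
  constructor
  · intro k p₁ r₁ hk hp hr
    ext γ
    constructor
    · rintro ⟨b, x, ⟨⟨b', x', hx'⟩, ⟨b'', x'', hx''⟩⟩, rfl⟩
      rw [Prod.mk.injEq] at hx' hx''
      obtain ⟨h1, h2⟩ := hx'
      obtain ⟨h3, h4⟩ := hx''
      -- r * x ∈ kP
      have hmem : r * x ∈ rIdeal P k := by
        rw [← hk]; exact ⟨⟨x', h2⟩, ⟨x, rfl⟩⟩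
      obtain ⟨m, hm⟩ := hmem
      have hx : x = r₁ * m := by
        apply mul_left_cancel (a := r)
        rw [← mul_assoc, hr, hm]
      have hb : b = b'' * q := by
        apply mul_right_cancel (b := r * x)
        rw [← mul_assoc]
        rw [h3, ← h4, mul_assoc]
      constructor
      · exact ⟨b * r, m, by rw [Prod.mk.injEq]; constructor <;>
          rw [hx] <;> simp [mul_assoc]⟩
      · exact ⟨b'', x, by rw [Prod.mk.injEq, hb]; constructor <;> simp [mul_assoc]⟩
    · rintro ⟨⟨c, y, rfl⟩, ⟨d, z, hz⟩⟩
      rw [Prod.mk.injEq] at hz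
      obtain ⟨h1, h2⟩ := hz
      have hc : c = d * (q * r) := by
        apply mul_right_cancel (b := r₁ * y)
        rw [← mul_assoc c, h1, h2]
      refine ⟨d * q, r₁ * y, ⟨⟨d * q, p₁ * y, ?_⟩, ⟨d, r * (r₁ * y), ?_⟩⟩, ?_⟩
      · have hkey : p * (p₁ * y) = r * (r₁ * y) := by
          rw [← mul_assoc, ← mul_assoc, hp, hr]
        rw [Prod.mk.injEq]
        constructor
        · simp [mul_assoc, ← hkey]
        · exact hkey.symm
      · simp [mul_assoc]
      · rw [Prod.mk.injEq, hc]
        constructor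
        · simp [mul_assoc]
        · rfl
  · intro h
    ext γ
    simp only [Set.mem_empty_iff_false, iff_false]
    rintro ⟨b, x, ⟨⟨b', x', hx'⟩, -⟩, rfl⟩
    rw [Prod.mk.injEq] at hx'
    have : r * x ∈ rIdeal P p ∩ rIdeal P r :=
      ⟨⟨x', hx'.2⟩, ⟨x, rfl⟩⟩
    rw [h] at this
    exact this
end

section
/- Let P be a cancellative monoid and let p, q, a, b ∈ P. Then Δ_p ∩ Δ^q ⊆ Δ_a ∩ Δ^b if and only if pP ⊆ aP and Pq ⊆ Pb. -/
/-- For a cancellative monoid `P` and `p, q, a, b ∈ P`: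
`Δ_p ∩ Δ^q ⊆ Δ_a ∩ Δ^b` iff `pP ⊆ aP` and `Pq ⊆ Pb`. -/
theorem deltaLow_inter_deltaHigh_subset_iff {P : Type*} [CancelMonoid P] (p q a b : P) :
    DeltaLow P p ∩ DeltaHigh P q ⊆ DeltaLow P a ∩ DeltaHigh P b ↔
      rIdeal P p ⊆ rIdeal P a ∧ lIdeal P q ⊆ lIdeal P b := by
  constructor
  · intro h
    constructor
    · rintro y ⟨x, rfl⟩
      have hmem : ((q * p * x, p * x) : P × P) ∈ DeltaLow P p ∩ DeltaHigh P q := by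
        constructor
        · exact ⟨q, x, rfl⟩
        · exact ⟨1, p * x, by simp [mul_assoc]⟩
      obtain ⟨⟨c, z, hz⟩, _⟩ := h hmem
      have := congrArg Prod.snd hz
      exact ⟨z, this⟩
    · rintro y ⟨c, rfl⟩
      have hmem : ((c * q * p, p) : P × P) ∈ DeltaLow P p ∩ DeltaHigh P q := by
        constructor
        · exact ⟨c * q, 1, by simp [mul_assoc]⟩
        · exact ⟨c, p, rfl⟩
      obtain ⟨_, ⟨d, z, hz⟩⟩ := h hmem
      have h2 : p = z := congrArg Prod.snd hz
      have h1 : c * q * p = d * b * z := congrArg Prod.fst hz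
      rw [← h2] at h1
      exact ⟨d, mul_right_cancel h1⟩
  · rintro ⟨hR, hL⟩ γ ⟨⟨b₁, x, rfl⟩, ⟨c, x', hc⟩⟩
    have hx' : x' = p * x := (congrArg Prod.snd hc).symm
    subst hx'
    have h1 : b₁ * p * x = c * q * (p * x) := congrArg Prod.fst hc
    have hb₁ : b₁ = c * q := by
      apply mul_right_cancel (b := p * x)
      rw [← mul_assoc]; exact h1
    obtain ⟨z, hz⟩ := hR ⟨x, rfl⟩
    obtain ⟨d, hd⟩ := hL ⟨c, rfl⟩
    constructor
    · exact ⟨b₁, z, by rw [mul_assoc, mul_assoc, ← hz]⟩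
    · exact ⟨d, p * x, by rw [hb₁, mul_assoc, mul_assoc, ← hd, mul_assoc]⟩
end

section
/- Let P be an LCM monoid, let p, q ∈ P, and let p₁, …, p_n, q₁, …, q_n ∈ P. If Δ_p ∩ Δ^q = ⋃_{i=1}^{n} (Δ_{p_i} ∩ Δ^{q_i}), then there exists an index i ∈ {1, …, n} such that Δ_p = Δ_{p_i} and Δ^q = Δ^{q_i}. (That is, the family of constructible sets is independent.) -/
/-- Independence of constructible sets: for an LCM monoid `P`, if
`Δ_p ∩ Δ^q = ⋃_{i=1}^n (Δ_{p_i} ∩ Δ^{q_i})` then `Δ_p = Δ_{p_i}` and `Δ^q = Δ^{q_i}`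
for some `i`. -/
theorem constructible_independent {P : Type*} [CancelMonoid P] (hP : IsLCMMonoid P)
    (p q : P) (n : ℕ) (ps qs : Fin n → P)
    (h : DeltaLow P p ∩ DeltaHigh P q = ⋃ i, (DeltaLow P (ps i) ∩ DeltaHigh P (qs i))) :
    ∃ i : Fin n, DeltaLow P p = DeltaLow P (ps i) ∧ DeltaHigh P q = DeltaHigh P (qs i) := by
  have hmem : (q * p, p) ∈ DeltaLow P p ∩ DeltaHigh P q :=
    ⟨⟨q, 1, by simp⟩, ⟨1, p, by simp⟩⟩
  rw [h, Set.mem_iUnion] at hmem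
  obtain ⟨i, ⟨b, x, hbx⟩, ⟨b', x', hbx'⟩⟩ := hmem
  simp only [Prod.mk.injEq] at hbx hbx'
  obtain ⟨hbx1, hbx2⟩ := hbx
  obtain ⟨hbx'1, hbx'2⟩ := hbx'
  subst hbx'2
  have hq : q = b' * qs i := mul_right_cancel hbx'1
  have hmem2 : (qs i * ps i, ps i) ∈ DeltaLow P p ∩ DeltaHigh P q := by
    rw [h, Set.mem_iUnion]
    exact ⟨i, ⟨qs i, 1, by simp⟩, ⟨1, ps i, by simp⟩⟩
  obtain ⟨⟨c, d, hcd⟩, ⟨c', d', hcd'⟩⟩ := hmem2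
  simp only [Prod.mk.injEq] at hcd hcd'
  obtain ⟨hcd1, hcd2⟩ := hcd
  obtain ⟨hcd'1, hcd'2⟩ := hcd'
  subst hcd'2
  have hqs : qs i = c' * q := by
    have h1 : qs i * ps i = (c' * q) * ps i := by rw [hcd'1, mul_assoc]
    exact mul_right_cancel h1
  have hdx : d * x = 1 := by
    have h1 : p * (d * x) = p * 1 := by
      rw [mul_one, ← mul_assoc, ← hcd2, ← hbx2]
    exact mul_left_cancel h1
  have hbc : b' * c' = 1 := by
    have h1 : (b' * c') * q = 1 * q := by
      rw [one_mul, mul_assoc, ← hqs, ← hq]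
    exact mul_right_cancel h1
  have hdx' : ∀ z : P, d * (x * z) = z := fun z => by
    rw [← mul_assoc, hdx, one_mul]
  have hbc' : ∀ z : P, b' * (c' * z) = z := fun z => by
    rw [← mul_assoc, hbc, one_mul]
  refine ⟨i, ?_, ?_⟩
  · ext γ
    simp only [DeltaLow, Set.mem_setOf_eq]
    constructor
    · rintro ⟨a, y, rfl⟩
      exact ⟨a, x * y, by simp [hcd2, mul_assoc, hdx']⟩
    · rintro ⟨a, y, rfl⟩
      exact ⟨a, d * y, by simp [hcd2, mul_assoc]⟩
  · ext γ
    simp only [DeltaHigh, Set.mem_setOf_eq]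
    constructor
    · rintro ⟨a, y, rfl⟩
      exact ⟨a * b', y, by simp [hqs, mul_assoc, hbc']⟩
    · rintro ⟨a, y, rfl⟩
      exact ⟨a * c', y, by simp [hqs, mul_assoc]⟩
end

section
/- Let P be an LCM monoid and let p, q, r, a, b, c ∈ P with q ∈ Pp ∩ rP and b ∈ Pa ∩ cP. Suppose raP ∩ qP = kP with r·a·a₁ = q·q₁ = k, and P(ra) ∩ Pb = Pl with r₁·r·a = b₁·b = l (for some a₁, q₁, r₁, b₁, k, l ∈ P). Then r₁·r·a·a₁ ∈ P(p·q₁) ∩ (b₁·c)P, and the composite relation {(γ, δ) ∈ (P×P) × (P×P) : ∃ ε, (γ, ε) ∈ V(a,b,c) and (ε, δ) ∈ V(p,q,r)} equals V(p·q₁, r₁·r·a·a₁, b₁·c). Moreover, if raP ∩ qP = ∅ or P(ra) ∩ Pb = ∅, this composite relation is empty. -/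
/-- For `q ∈ Pp ∩ rP` with `q = r * r'`, the graph of the partial bijection
`v_p v_q* v_r` of `Δ`: `V(p,q,r) = {((bqx, r'x), (bqx, px)) : b, x ∈ P}`. -/
def Vrel (P : Type*) [Monoid P] (p q r' : P) : Set ((P × P) × (P × P)) :=
  {γ | ∃ b x : P, γ = ((b * q * x, r' * x), (b * q * x, p * x))}

/-- The product formula for `S_P`: with `q ∈ Pp ∩ rP`, `b ∈ Pa ∩ cP`,
`raP ∩ qP = kP` (`raa₁ = qq₁ = k`) and `P(ra) ∩ Pb = Pl` (`r₁ra = b₁b = l`),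
the element `r₁raa₁` lies in `P(pq₁) ∩ (b₁c)P` and the composite of the partial
bijections `V(a,b,c)` followed by `V(p,q,r)` is `V(pq₁, r₁raa₁, b₁c)`; if either
`raP ∩ qP = ∅` or `P(ra) ∩ Pb = ∅` the composite is empty. -/
theorem Vrel_comp {P : Type*} [CancelMonoid P] (hP : IsLCMMonoid P)
    (p q r r' a b c c' : P)
    (hq : q ∈ lIdeal P p ∩ rIdeal P r) (hb : b ∈ lIdeal P a ∩ rIdeal P c)
    (hr' : q = r * r') (hc' : b = c * c') :
    (∀ k a₁ q₁ l r₁ b₁ : P,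
      rIdeal P (r * a) ∩ rIdeal P q = rIdeal P k → r * a * a₁ = k → q * q₁ = k →
      lIdeal P (r * a) ∩ lIdeal P b = lIdeal P l → r₁ * (r * a) = l → b₁ * b = l →
        (r₁ * r * a * a₁ ∈ lIdeal P (p * q₁) ∩ rIdeal P (b₁ * c) ∧
        {γ : (P × P) × (P × P) | ∃ ε : P × P,
            (γ.1, ε) ∈ Vrel P a b c' ∧ (ε, γ.2) ∈ Vrel P p q r'}
          = Vrel P (p * q₁) (r₁ * r * a * a₁) (c' * a₁))) ∧
    ((rIdeal P (r * a) ∩ rIdeal P q = ∅ ∨ lIdeal P (r * a) ∩ lIdeal P b = ∅) →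
      {γ : (P × P) × (P × P) | ∃ ε : P × P,
          (γ.1, ε) ∈ Vrel P a b c' ∧ (ε, γ.2) ∈ Vrel P p q r'} = ∅) := by
  obtain ⟨⟨p₀, hp₀⟩, -⟩ := hq
  obtain ⟨⟨a₀, ha₀⟩, -⟩ := hb
  constructor
  · intro k a₁ q₁ l r₁ b₁ hkint hka hkq hlint hlr hlb
    have hkrq : q * q₁ = r * a * a₁ := hkq.trans hka.symm
    have hk2 : ∀ t : P, q * (q₁ * t) = r * (a * (a₁ * t)) := fun t => by
      rw [← mul_assoc, hkrq]; simp [mul_assoc]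
    have hll : b₁ * b = r₁ * (r * a) := hlb.trans hlr.symm
    have hl2 : ∀ t : P, b₁ * (b * t) = r₁ * (r * (a * t)) := fun t => by
      rw [← mul_assoc, hll]; simp [mul_assoc]
    have haq : a * a₁ = r' * q₁ := by
      have : r * (a * a₁) = r * (r' * q₁) := by
        rw [← mul_assoc, ← mul_assoc, hka, ← hr', ← hkq]
      exact mul_left_cancel this
    have ha2 : ∀ t : P, a * (a₁ * t) = r' * (q₁ * t) := fun t => by
      rw [← mul_assoc, haq, mul_assoc]
    constructor
    · constructor
      · exact ⟨r₁ * p₀, by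
          have h1 : q * q₁ = p₀ * p * q₁ := by rw [hp₀]
          calc r₁ * r * a * a₁ = r₁ * (q * q₁) := by rw [hkrq]; simp [mul_assoc]
            _ = r₁ * (p₀ * p * q₁) := by rw [h1]
            _ = r₁ * p₀ * (p * q₁) := by simp [mul_assoc]⟩
      · exact ⟨c' * a₁, by
          have h1 : b₁ * b = b₁ * (c * c') := by rw [hc']
          calc r₁ * r * a * a₁ = b₁ * b * a₁ := by rw [hll]; simp [mul_assoc]
            _ = b₁ * (c * c') * a₁ := by rw [h1]
            _ = b₁ * c * (c' * a₁) := by simp [mul_assoc]⟩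
    · ext ⟨⟨u1, u2⟩, w1, w2⟩
      simp only [Set.mem_setOf_eq, Vrel, Prod.mk.injEq, Prod.ext_iff]
      constructor
      · rintro ⟨⟨e1, e2⟩, ⟨β, x, ⟨hu1, hu2⟩, he1, he2⟩, ⟨β', y, ⟨he1', he2'⟩, hw1, hw2⟩⟩
        have hax : a * x = r' * y := he2.symm.trans he2'
        have h0 : β * b * x = β' * q * y := he1.symm.trans he1'
        have hrax : r * a * x = q * y := by rw [mul_assoc, hax, hr', mul_assoc]
        obtain ⟨z, hz⟩ : r * a * x ∈ rIdeal P k := by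
          rw [← hkint]; exact ⟨⟨x, rfl⟩, ⟨y, hrax⟩⟩
        have hx : x = a₁ * z := by
          refine mul_left_cancel (a := r * a) ?_
          rw [hz, ← hka]; simp [mul_assoc]
        have hy : y = q₁ * z := by
          refine mul_left_cancel (a := q) ?_
          rw [← hrax, hz, ← hkq]; simp [mul_assoc]
        have hbb : β * b = β' * (r * a) := by
          refine mul_right_cancel (b := x) ?_
          calc β * b * x = β' * q * y := h0
            _ = β' * (q * y) := by rw [mul_assoc]
            _ = β' * (r * a * x) := by rw [hrax]
            _ = β' * (r * a) * x := by simp [mul_assoc]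
        obtain ⟨w, hw⟩ : β * b ∈ lIdeal P l := by
          rw [← hlint]; exact ⟨⟨β', hbb⟩, ⟨β, rfl⟩⟩
        have hβ : β = w * b₁ := by
          refine mul_right_cancel (b := b) ?_
          rw [hw, ← hlb, ← mul_assoc]
        have hβ' : β' = w * r₁ := by
          refine mul_right_cancel (b := r * a) ?_
          rw [← hbb, hw, ← hlr, ← mul_assoc]
        subst hβ hβ' hx hy
        refine ⟨w, z, ⟨?_, ?_⟩, ?_, ?_⟩ <;>
          simp [hu1, hu2, hw1, hw2, mul_assoc, hl2, hk2]
      · rintro ⟨m, z, ⟨hu1, hu2⟩, hw1, hw2⟩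
        refine ⟨(m * (r₁ * r * a * a₁) * z, a * (a₁ * z)),
          ⟨m * b₁, a₁ * z, ⟨?_, ?_⟩, ?_, ?_⟩,
          ⟨m * r₁, q₁ * z, ⟨?_, ?_⟩, ?_, ?_⟩⟩ <;>
          simp [hu1, hu2, hw1, hw2, mul_assoc, hl2, hk2, ha2]
  · intro hemp
    rw [Set.eq_empty_iff_forall_notMem]
    rintro ⟨⟨u1, u2⟩, w1, w2⟩ ⟨⟨e1, e2⟩, ⟨β, x, h1⟩, ⟨β', y, h2⟩⟩
    simp only [Prod.mk.injEq, Prod.ext_iff] at h1 h2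
    obtain ⟨⟨hu1, hu2⟩, he1, he2⟩ := h1
    obtain ⟨⟨he1', he2'⟩, hw1, hw2⟩ := h2
    have hax : a * x = r' * y := he2.symm.trans he2'
    have h0 : β * b * x = β' * q * y := he1.symm.trans he1'
    have hrax : r * a * x = q * y := by rw [mul_assoc, hax, hr', mul_assoc]
    have hbb : β * b = β' * (r * a) := by
      refine mul_right_cancel (b := x) ?_
      calc β * b * x = β' * q * y := h0
        _ = β' * (q * y) := by rw [mul_assoc]
        _ = β' * (r * a * x) := by rw [hrax]
        _ = β' * (r * a) * x := by simp [mul_assoc]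
    rcases hemp with h | h
    · have : r * a * x ∈ rIdeal P (r * a) ∩ rIdeal P q := ⟨⟨x, rfl⟩, ⟨y, hrax⟩⟩
      rw [h] at this; exact this
    · have : β * b ∈ lIdeal P (r * a) ∩ lIdeal P b := ⟨⟨β', hbb⟩, ⟨β, rfl⟩⟩
      rw [h] at this; exact this
end

section
/- Let P be an LCM monoid and let p, q, r, a, b, c ∈ P with q ∈ Pp ∩ rP and b ∈ Pa ∩ cP. Then V(p,q,r) = V(a,b,c) (as relations on P × P) if and only if there exist invertible elements u, v ∈ U(P) such that p = au, q = vbu, and r = vc. -/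
/-- For an LCM monoid `P` with `q ∈ Pp ∩ rP` (`q = rr'`) and `b ∈ Pa ∩ cP` (`b = cc'`),
`V(p,q,r) = V(a,b,c)` iff there exist invertible `u, v ∈ U(P)` with `p = au`, `q = vbu`
and `r = vc`. -/
theorem Vrel_eq_iff {P : Type*} [CancelMonoid P] (hP : IsLCMMonoid P)
    (p q r r' a b c c' : P)
    (hq : q ∈ lIdeal P p ∩ rIdeal P r) (hb : b ∈ lIdeal P a ∩ rIdeal P c)
    (hr' : q = r * r') (hc' : b = c * c') :
    Vrel P p q r' = Vrel P a b c' ↔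
      ∃ u v : P, IsUnit u ∧ IsUnit v ∧ p = a * u ∧ q = v * b * u ∧ r = v * c := by
  constructor
  · intro h
    have h1 : ((q, r'), (q, p)) ∈ Vrel P a b c' := by
      rw [← h]; exact ⟨1, 1, by simp⟩
    have h2 : ((b, c'), (b, a)) ∈ Vrel P p q r' := by
      rw [h]; exact ⟨1, 1, by simp⟩
    obtain ⟨v, u, huv⟩ := h1
    obtain ⟨v', u', huv'⟩ := h2
    simp only [Prod.mk.injEq] at huv huv'
    obtain ⟨⟨hq1, hr'1⟩, _, hp1⟩ := huv
    obtain ⟨⟨hb1, hc'1⟩, _, ha1⟩ := huv'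
    have hu1 : u' * u = 1 := by
      have hpe : p * (u' * u) = p * 1 := by
        rw [mul_one, ← mul_assoc, ← ha1, ← hp1]
      exact mul_left_cancel hpe
    have hu2 : u * u' = 1 := by
      have : c' * (u * u') = c' * 1 := by
        rw [mul_one, ← mul_assoc, ← hr'1, ← hc'1]
      exact mul_left_cancel this
    have hv1 : v * v' = 1 := by
      have : (v * v') * q = 1 * q := by
        rw [one_mul]
        calc (v * v') * q = v * (v' * q * u') * u := by
              rw [mul_assoc, mul_assoc, mul_assoc, mul_assoc, hu1, mul_one]
          _ = v * b * u := by rw [← hb1]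
          _ = q := hq1.symm
      exact mul_right_cancel this
    have hv2 : v' * v = 1 := by
      have : (v' * v) * b = 1 * b := by
        rw [one_mul]
        calc (v' * v) * b = v' * (v * b * u) * u' := by
              rw [mul_assoc, mul_assoc, mul_assoc, mul_assoc, hu2, mul_one]
          _ = v' * q * u' := by rw [← hq1]
          _ = b := hb1.symm
      exact mul_right_cancel this
    refine ⟨u, v, ⟨⟨u, u', hu2, hu1⟩, rfl⟩, ⟨⟨v, v', hv1, hv2⟩, rfl⟩, hp1, hq1, ?_⟩
    have : r * r' = (v * c) * r' := by
      rw [← hr', hq1, hc', hr'1]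
      simp only [mul_assoc]
    exact mul_right_cancel this
  · rintro ⟨u, v, hu, hv, hp, hqe, hr⟩
    obtain ⟨u₀, rfl⟩ := hu
    obtain ⟨v₀, rfl⟩ := hv
    have hr'e : r' = c' * u₀ := by
      have : (↑v₀ * c) * r' = (↑v₀ * c) * (c' * ↑u₀) := by
        rw [← hr, ← hr', hr, hqe, hc']
        simp only [mul_assoc]
      exact mul_left_cancel this
    ext γ
    constructor
    · rintro ⟨β, x, rfl⟩
      refine ⟨β * ↑v₀, ↑u₀ * x, ?_⟩
      simp only [hqe, hp, hr'e, Prod.mk.injEq, mul_assoc, and_self, true_and]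
    · rintro ⟨β, x, rfl⟩
      refine ⟨β * ↑v₀⁻¹, ↑(u₀⁻¹) * x, ?_⟩
      simp only [hqe, hp, hr'e, Prod.mk.injEq, mul_assoc, Units.mul_inv_cancel_left,
        Units.inv_mul_cancel_left, and_self, true_and]
end

section
/- Let P be an LCM monoid and let p, q, r ∈ P with q ∈ Pp ∩ rP. Suppose there exist a, b ∈ P such that every point γ ∈ Δ_a ∩ Δ^b satisfies (γ, γ) ∈ V(p,q,r) (i.e. the partial bijection with graph V(p,q,r) fixes the nonempty constructible set Δ_a ∩ Δ^b pointwise). Then q = rp, so V(p,q,r) is the graph of an idempotent (a partial identity map). That is, the inverse semigroup S_P is E*-unitary. -/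
/-- `S_P` is `E*`-unitary: if the partial bijection with graph `V(p,q,r)` fixes pointwise
some (automatically nonempty) constructible set `Δ_a ∩ Δ^b`, then `q = rp`, i.e.
`V(p,q,r)` is the graph of an idempotent. -/
theorem SP_EstarUnitary {P : Type*} [CancelMonoid P] (hP : IsLCMMonoid P)
    (p q r r' : P) (hq : q ∈ lIdeal P p ∩ rIdeal P r) (hr' : q = r * r')
    (a b : P)
    (hfix : ∀ γ ∈ DeltaLow P a ∩ DeltaHigh P b, (γ, γ) ∈ Vrel P p q r') :
    q = r * p := by
  have hγ : ((b * a * 1, a * 1) : P × P) ∈ DeltaLow P a ∩ DeltaHigh P b := by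
    constructor
    · exact ⟨b, 1, rfl⟩
    · exact ⟨1, a, by simp⟩
  obtain ⟨c, x, hx⟩ := hfix _ hγ
  have h1 : r' * x = a * 1 := congrArg Prod.snd (congrArg Prod.fst hx.symm)
  have h2 : p * x = a * 1 := congrArg Prod.snd (congrArg Prod.snd hx.symm)
  have : r' = p := mul_right_cancel (h1.trans h2.symm)
  rw [hr', this]
end

section
/- Let P be a countable LCM monoid and let T : P → B(H) be the family of truncated shift operators on H = ℓ²(Δ), i.e. bounded operators satisfying T_p δ_{(a,x)} = δ_{(a,px)} whenever (a,px) ∈ Δ and T_p δ_{(a,x)} = 0 otherwise. Then the closure of the linear span of {T_p ∘ (T_q)* ∘ T_r : p, q, r ∈ P, q ∈ Pp ∩ rP} equals the closed *-subalgebra of B(H) generated by {T_p : p ∈ P} (the C*-algebra C*_{ts}(P, P^{op})). -/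
open scoped lp

theorem lp.ext_continuousLinearMap_single {𝕜 ι : Type*} [RCLike 𝕜] [DecidableEq ι]
    {S S' : ℓ²(ι, 𝕜) →L[𝕜] ℓ²(ι, 𝕜)}
    (h : ∀ i, S (lp.single 2 i 1) = S' (lp.single 2 i 1)) : S = S' :=
  lp.ext_continuousLinearMap ENNReal.ofNat_ne_top fun i => ContinuousLinearMap.ext_ring (h i)

def IsRelOperator {𝕜 ι : Type*} [RCLike 𝕜] [DecidableEq ι] (R : ι → ι → Prop)
    (S : ℓ²(ι, 𝕜) →L[𝕜] ℓ²(ι, 𝕜)) : Prop :=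
  ∀ i, (∀ j, R i j → S (lp.single 2 i 1) = lp.single 2 j 1) ∧
    ((∀ j, ¬R i j) → S (lp.single 2 i 1) = 0)

namespace IsRelOperator

variable {𝕜 ι : Type*} [RCLike 𝕜] [DecidableEq ι] {R R' : ι → ι → Prop}
  {S S' : ℓ²(ι, 𝕜) →L[𝕜] ℓ²(ι, 𝕜)}

theorem unique (h : IsRelOperator R S) (h' : IsRelOperator R S') : S = S' := by
  refine lp.ext_continuousLinearMap_single fun i => ?_
  by_cases hi : ∃ j, R i j
  · obtain ⟨j, hj⟩ := hi
    rw [(h i).1 j hj, (h' i).1 j hj]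
  · rw [(h i).2 (not_exists.1 hi), (h' i).2 (not_exists.1 hi)]

theorem eq_zero (h : IsRelOperator R S) (hR : ∀ i j, ¬R i j) : S = 0 :=
  lp.ext_continuousLinearMap_single fun i => (h i).2 (hR i)

theorem comp (h : IsRelOperator R S) (h' : IsRelOperator R' S') :
    IsRelOperator (Relation.Comp R' R) (S.comp S') := by
  intro i
  refine ⟨fun k ⟨j, hij, hjk⟩ => ?_, fun hk => ?_⟩
  · rw [S.comp_apply, (h' i).1 j hij, (h j).1 k hjk]
  · rw [S.comp_apply]
    by_cases hi : ∃ j, R' i j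
    · obtain ⟨j, hj⟩ := hi
      rw [(h' i).1 j hj, (h j).2 fun k hjk => hk k ⟨j, hj, hjk⟩]
    · rw [(h' i).2 (not_exists.1 hi), map_zero]

theorem apply_single_apply_of_not_rel (h : IsRelOperator R S) {i j : ι} (hij : ¬R i j) :
    S (lp.single 2 i 1) j = 0 := by
  by_cases hi : ∃ k, R i k
  · obtain ⟨k, hk⟩ := hi
    rw [(h i).1 k hk]
    exact lp.single_apply_ne _ _ _ fun hjk => hij (hjk ▸ hk)
  · rw [(h i).2 (not_exists.1 hi)]
    rfl

theorem adjoint (h : IsRelOperator R S) (hR : Relator.LeftUnique R) :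
    IsRelOperator (flip R) (ContinuousLinearMap.adjoint S) := by
  have coord : ∀ i j, ContinuousLinearMap.adjoint S (lp.single 2 j 1) i
      = starRingEnd 𝕜 (S (lp.single 2 i 1) j) := by
    intro i j
    have := ContinuousLinearMap.adjoint_inner_right S (lp.single 2 i (1 : 𝕜)) (lp.single 2 j 1)
    simpa [lp.inner_single_left, lp.inner_single_right] using this
  intro j
  refine ⟨fun i₀ hi₀ => lp.ext (funext fun i => ?_), fun hj => lp.ext (funext fun i => ?_)⟩
  · rw [coord]
    by_cases hi : i = i₀
    · subst hi
      simp [(h i).1 j hi₀]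
    · rw [h.apply_single_apply_of_not_rel fun hij => hi (hR hij hi₀),
        lp.single_apply_ne _ _ _ hi, map_zero]
  · rw [coord, h.apply_single_apply_of_not_rel (hj i), map_zero]
    rfl

end IsRelOperator

theorem span_eq_starAlgebraAdjoin {R A : Type*} [CommSemiring R] [StarRing R] [Semiring A]
    [StarRing A] [Algebra R A] [StarModule R A] {s G : Set A} (hsG : s ⊆ G)
    (hGs : G ⊆ StarAlgebra.adjoin R s) (h1 : 1 ∈ G) (hmul : ∀ x ∈ G, ∀ y ∈ G, x * y ∈ insert 0 G)
    (hstar : ∀ x ∈ G, star x ∈ G) :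
    (Submodule.span R G : Set A) = StarAlgebra.adjoin R s := by
  let M : Submonoid A :=
    { carrier := insert 0 G
      one_mem' := Or.inr h1
      mul_mem' := by
        rintro x y (rfl | hx) (rfl | hy)
        · exact Or.inl (zero_mul _)
        · exact Or.inl (zero_mul _)
        · exact Or.inl (mul_zero _)
        · exact hmul x hx y hy }
  have hclosure : Submonoid.closure (s ∪ star s) ≤ M :=
    Submonoid.closure_le.2 <| Set.union_subset (hsG.trans (Set.subset_insert _ _))
      fun x hx => Or.inr (star_star x ▸ hstar _ (hsG hx))
  refine subset_antisymm
    (Submodule.span_le (p := Subalgebra.toSubmodule (StarAlgebra.adjoin R s).toSubalgebra).2 hGs)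
    ?_
  change (Subalgebra.toSubmodule (StarAlgebra.adjoin R s).toSubalgebra : Set A) ⊆ _
  rw [StarAlgebra.adjoin_toSubalgebra, Algebra.adjoin_eq_span,
    ← Submodule.span_insert_zero (s := G)]
  exact Submodule.span_mono hclosure

section Monoid

variable {P : Type*} [Monoid P] {t₁ p₁ q₁ t₂ p₂ q₂ : P} {γ γ'' : Delta P}

theorem mem_Delta_iff {a x : P} : (a, x) ∈ Delta P ↔ a ∈ lIdeal P x := by
  constructor
  · rintro ⟨b, y, h⟩
    simp only [Prod.mk.injEq] at h
    exact ⟨b, h.2 ▸ h.1⟩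
  · rintro ⟨b, rfl⟩
    exact ⟨b, x, rfl⟩

theorem lIdeal_mul_subset {p q : P} (h : q ∈ lIdeal P p) (y : P) :
    lIdeal P (q * y) ⊆ lIdeal P (p * y) := by
  obtain ⟨s, rfl⟩ := h
  rintro a ⟨b, rfl⟩
  exact ⟨b * s, by simp only [mul_assoc]⟩

theorem image_mul_right_lIdeal (w c : P) : (· * c) '' lIdeal P w = lIdeal P (w * c) := by
  ext a
  constructor
  · rintro ⟨_, ⟨b, rfl⟩, rfl⟩
    exact ⟨b, mul_assoc _ _ _⟩
  · rintro ⟨b, rfl⟩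
    exact ⟨b * w, ⟨b, rfl⟩, mul_assoc b w c⟩

theorem deltaBasis_eq_single [DecidableEq (Delta P)] (γ : Delta P) :
    deltaBasis P γ = lp.single 2 γ 1 := by
  unfold deltaBasis
  congr
  exact Subsingleton.elim _ _

def shiftRel (t p q : P) (γ γ' : Delta P) : Prop :=
  ∃ a y, (γ : P × P) = (a, t * y) ∧ (γ' : P × P) = (a, p * y) ∧ a ∈ lIdeal P (q * y)

theorem flip_shiftRel (t p q : P) : flip (shiftRel t p q) = shiftRel p t q := by
  funext γ γ'
  exact propext <| exists₂_congr fun _ _ => and_left_comm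

theorem comp_shiftRel_iff (h₂ : q₂ ∈ lIdeal P p₂) :
    Relation.Comp (shiftRel t₂ p₂ q₂) (shiftRel t₁ p₁ q₁) γ γ'' ↔
      ∃ a y z, p₂ * y = t₁ * z ∧ (γ : P × P) = (a, t₂ * y) ∧ (γ'' : P × P) = (a, p₁ * z) ∧
        a ∈ lIdeal P (q₂ * y) ∩ lIdeal P (q₁ * z) := by
  constructor
  · rintro ⟨γ', ⟨a, y, hγ, hγ', ha⟩, ⟨a', z, hγ'₁, hγ'', ha'⟩⟩
    obtain ⟨rfl, hyz⟩ := Prod.mk.inj (hγ'.symm.trans hγ'₁)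
    exact ⟨a, y, z, hyz, hγ, hγ'', ha, ha'⟩
  · rintro ⟨a, y, z, hyz, hγ, hγ'', ha, ha'⟩
    exact ⟨⟨(a, p₂ * y), mem_Delta_iff.2 (lIdeal_mul_subset h₂ y ha)⟩,
      ⟨a, y, hγ, rfl, ha⟩, ⟨a, z, by rw [← hyz], hγ'', ha'⟩⟩

theorem shiftRel_comp_shiftRel_one (t p q : P) :
    Relation.Comp (shiftRel t 1 q) (shiftRel 1 p p) = shiftRel t p q := by
  funext γ γ''
  refine propext ((comp_shiftRel_iff ⟨q, (mul_one q).symm⟩).trans ⟨?_, ?_⟩)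
  · rintro ⟨a, y, z, hyz, hγ, hγ'', ha, -⟩
    rw [one_mul, one_mul] at hyz
    exact ⟨a, y, hγ, hyz ▸ hγ'', ha⟩
  · rintro ⟨a, y, hγ, hγ'', ha⟩
    exact ⟨a, y, y, rfl, hγ, hγ'', ha, mem_Delta_iff.1 (hγ'' ▸ γ''.2)⟩

end Monoid

section CancelMonoid


variable {P : Type*} [CancelMonoid P] {t₁ p₁ q₁ t₂ p₂ q₂ : P} {γ γ'' : Delta P}

theorem lIdeal_mul_inter_lIdeal_mul (m n c : P) :
    lIdeal P (m * c) ∩ lIdeal P (n * c) = (· * c) '' (lIdeal P m ∩ lIdeal P n) := by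
  ext a
  constructor
  · rintro ⟨⟨b, rfl⟩, ⟨b', hb'⟩⟩
    rw [← mul_assoc, ← mul_assoc] at hb'
    exact ⟨b * m, ⟨⟨b, rfl⟩, ⟨b', mul_right_cancel hb'⟩⟩, mul_assoc _ _ _⟩
  · rintro ⟨_, ⟨⟨b, rfl⟩, ⟨b', hb'⟩⟩, rfl⟩
    exact ⟨⟨b, mul_assoc _ _ _⟩, ⟨b', by simp only [hb', mul_assoc]⟩⟩

theorem shiftRel_leftUnique (t p q : P) : Relator.LeftUnique (shiftRel t p q) := by
  rintro ⟨_, _⟩ ⟨_, _⟩ γ' ⟨a, y, rfl, h', -⟩ ⟨a', y', rfl, h'', -⟩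
  obtain ⟨rfl, hy⟩ := Prod.mk.inj (h'.symm.trans h'')
  exact Subtype.ext (by simp only [mul_left_cancel hy])

theorem shiftRel_one_comp_shiftRel_one_of_eq_mul {q r t : P} (h : q = r * t) :
    Relation.Comp (shiftRel 1 r r) (shiftRel q 1 q) = shiftRel t 1 q := by
  funext γ γ''
  refine propext ((comp_shiftRel_iff ⟨1, (one_mul r).symm⟩).trans ⟨?_, ?_⟩)
  · rintro ⟨a, y, z, hyz, hγ, hγ'', -, ha⟩
    have hy : y = t * z := mul_left_cancel (by rw [hyz, h, mul_assoc])
    exact ⟨a, z, by rw [hγ, hy, one_mul], hγ'', ha⟩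
  · rintro ⟨a, z, hγ, hγ'', ha⟩
    refine ⟨a, t * z, z, by rw [h, mul_assoc], by rw [hγ, one_mul], hγ'', ?_, ha⟩
    rwa [← mul_assoc, ← h]

theorem comp_shiftRel_iff_of_rIdeal_inter {w y₀ z₀ : P} (h₂ : q₂ ∈ lIdeal P p₂)
    (hw : rIdeal P p₂ ∩ rIdeal P t₁ = rIdeal P w) (hy₀ : w = p₂ * y₀) (hz₀ : w = t₁ * z₀) :
    Relation.Comp (shiftRel t₂ p₂ q₂) (shiftRel t₁ p₁ q₁) γ γ'' ↔
      ∃ a c, (γ : P × P) = (a, t₂ * y₀ * c) ∧ (γ'' : P × P) = (a, p₁ * z₀ * c) ∧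
        a ∈ (· * c) '' (lIdeal P (q₂ * y₀) ∩ lIdeal P (q₁ * z₀)) := by
  rw [comp_shiftRel_iff h₂]
  constructor
  · rintro ⟨a, y, z, hyz, hγ, hγ'', ha⟩
    obtain ⟨c, hc⟩ : p₂ * y ∈ rIdeal P w := hw ▸ ⟨⟨y, rfl⟩, ⟨z, hyz⟩⟩
    obtain rfl : y = y₀ * c := mul_left_cancel (by rw [hc, hy₀, mul_assoc])
    obtain rfl : z = z₀ * c := mul_left_cancel (a := t₁) (by rw [← hyz, hc, hz₀, mul_assoc])
    refine ⟨a, c, by rw [hγ, mul_assoc], by rw [hγ'', mul_assoc], ?_⟩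
    rwa [← lIdeal_mul_inter_lIdeal_mul, mul_assoc, mul_assoc]
  · rintro ⟨a, c, hγ, hγ'', ha⟩
    refine ⟨a, y₀ * c, z₀ * c, by rw [← mul_assoc, ← mul_assoc, ← hy₀, hz₀],
      by rw [hγ, mul_assoc], by rw [hγ'', mul_assoc], ?_⟩
    rwa [← mul_assoc, ← mul_assoc, lIdeal_mul_inter_lIdeal_mul]

theorem shiftRel_comp_shiftRel_cases (hP : IsLCMMonoid P) (h₁ : q₁ ∈ lIdeal P p₁ ∩ lIdeal P t₁)
    (h₂ : q₂ ∈ lIdeal P p₂ ∩ lIdeal P t₂) :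
    (∀ γ γ'', ¬Relation.Comp (shiftRel t₂ p₂ q₂) (shiftRel t₁ p₁ q₁) γ γ'') ∨
      ∃ t p q, q ∈ lIdeal P p ∩ lIdeal P t ∧
        Relation.Comp (shiftRel t₂ p₂ q₂) (shiftRel t₁ p₁ q₁) = shiftRel t p q := by
  rcases hP.1 p₂ t₁ with hw | ⟨w, hw⟩
  · refine Or.inl fun γ γ'' hcomp => ?_
    obtain ⟨a, y, z, hyz, -⟩ := (comp_shiftRel_iff h₂.1).1 hcomp
    have hy : p₂ * y ∈ rIdeal P p₂ ∩ rIdeal P t₁ := ⟨⟨y, rfl⟩, ⟨z, hyz⟩⟩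
    rwa [hw] at hy
  obtain ⟨⟨y₀, hy₀⟩, ⟨z₀, hz₀⟩⟩ : w ∈ rIdeal P p₂ ∩ rIdeal P t₁ := hw ▸ ⟨1, (mul_one w).symm⟩
  have hcomp := fun γ γ'' ↦ comp_shiftRel_iff_of_rIdeal_inter (t₂ := t₂) (p₁ := p₁) (q₁ := q₁)
    (γ := γ) (γ'' := γ'') h₂.1 hw hy₀ hz₀
  rcases hP.2 (q₂ * y₀) (q₁ * z₀) with hw' | ⟨w', hw'⟩
  · refine Or.inl fun γ γ'' h => ?_
    obtain ⟨a, c, -, -, ha⟩ := (hcomp γ γ'').1 h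
    rw [hw', Set.image_empty] at ha
    exact ha
  · have hw'_mem : w' ∈ lIdeal P (q₂ * y₀) ∩ lIdeal P (q₁ * z₀) := hw' ▸ ⟨1, (one_mul w').symm⟩
    refine Or.inr ⟨t₂ * y₀, p₁ * z₀, w',
      ⟨lIdeal_mul_subset h₁.1 z₀ hw'_mem.2, lIdeal_mul_subset h₂.2 y₀ hw'_mem.1⟩, ?_⟩
    funext γ γ''
    simp_rw [hcomp, hw', image_mul_right_lIdeal]
    rfl

end CancelMonoid

section Operators

variable {P : Type*} [CancelMonoid P] [DecidableEq (Delta P)]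
  {T : P → (ℓ²(Delta P, ℂ) →L[ℂ] ℓ²(Delta P, ℂ))}

theorem isRelOperator_truncShift (hT : IsTruncShift P T) (p : P) :
    IsRelOperator (shiftRel 1 p p) (T p) := by
  rintro ⟨⟨a, x⟩, hγ⟩
  simp only [← deltaBasis_eq_single]
  refine ⟨?_, fun hnone => (hT p _).2 fun hpx => hnone ⟨_, hpx⟩ ⟨a, x, by rw [one_mul], rfl,
    mem_Delta_iff.1 hpx⟩⟩
  rintro ⟨γ', hγ'⟩ ⟨a, y, hγ, rfl, ha⟩
  obtain ⟨rfl, rfl⟩ := Prod.mk.inj hγ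
  simp only [one_mul]
  exact (hT p _).1 hγ'

theorem isRelOperator_generator (hT : IsTruncShift P T) {p q r t : P} (h : q = r * t) :
    IsRelOperator (shiftRel t p q)
      ((T p).comp ((ContinuousLinearMap.adjoint (T q)).comp (T r))) := by
  have := (isRelOperator_truncShift hT p).comp
    (((isRelOperator_truncShift hT q).adjoint (shiftRel_leftUnique 1 q q)).comp
      (isRelOperator_truncShift hT r))
  rwa [flip_shiftRel, shiftRel_one_comp_shiftRel_one_of_eq_mul h,
    shiftRel_comp_shiftRel_one] at this

variable (P) in
def shiftOps : Set (ℓ²(Delta P, ℂ) →L[ℂ] ℓ²(Delta P, ℂ)) :=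
  {S | ∃ t p q, q ∈ lIdeal P p ∩ lIdeal P t ∧ IsRelOperator (shiftRel t p q) S}

theorem generators_eq_shiftOps (hT : IsTruncShift P T) :
    {S | ∃ p q r : P, q ∈ lIdeal P p ∩ rIdeal P r ∧
      S = (T p).comp ((ContinuousLinearMap.adjoint (T q)).comp (T r))} = shiftOps P := by
  ext S
  constructor
  · rintro ⟨p, q, r, ⟨hp, t, ht⟩, rfl⟩
    exact ⟨t, p, q, ⟨hp, r, ht⟩, isRelOperator_generator hT ht⟩
  · rintro ⟨t, p, q, ⟨hp, r, ht⟩, hS⟩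
    exact ⟨p, q, r, ⟨hp, t, ht⟩, hS.unique (isRelOperator_generator hT ht)⟩

theorem one_mem_shiftOps : 1 ∈ shiftOps P := by
  refine ⟨1, 1, 1, ⟨⟨1, (one_mul 1).symm⟩, ⟨1, (one_mul 1).symm⟩⟩, fun ⟨⟨a, x⟩, hγ⟩ => ⟨?_, ?_⟩⟩
  · rintro γ' ⟨a', y, hγ₁, hγ₂, -⟩
    obtain rfl : γ' = ⟨(a, x), hγ⟩ := Subtype.ext (hγ₂.trans hγ₁.symm)
    rfl
  · exact fun hnone => absurd ⟨a, x, by rw [one_mul], by rw [one_mul], by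
      rwa [one_mul, ← mem_Delta_iff]⟩ (hnone ⟨(a, x), hγ⟩)

theorem truncShift_mem_shiftOps (hT : IsTruncShift P T) (p : P) : T p ∈ shiftOps P :=
  ⟨1, p, p, ⟨⟨1, (one_mul p).symm⟩, ⟨p, (mul_one p).symm⟩⟩, isRelOperator_truncShift hT p⟩

theorem star_mem_shiftOps {S : ℓ²(Delta P, ℂ) →L[ℂ] ℓ²(Delta P, ℂ)} (hS : S ∈ shiftOps P) :
    star S ∈ shiftOps P := by
  obtain ⟨t, p, q, hq, hS⟩ := hS
  refine ⟨p, t, q, hq.symm, ?_⟩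
  rw [ContinuousLinearMap.star_eq_adjoint, ← flip_shiftRel]
  exact hS.adjoint (shiftRel_leftUnique t p q)

theorem mul_mem_shiftOps (hP : IsLCMMonoid P) {S S' : ℓ²(Delta P, ℂ) →L[ℂ] ℓ²(Delta P, ℂ)}
    (hS : S ∈ shiftOps P) (hS' : S' ∈ shiftOps P) : S * S' ∈ insert 0 (shiftOps P) := by
  obtain ⟨t₁, p₁, q₁, h₁, hS⟩ := hS
  obtain ⟨t₂, p₂, q₂, h₂, hS'⟩ := hS'
  have hSS' := hS.comp hS'
  rcases shiftRel_comp_shiftRel_cases hP h₁ h₂ with hempty | ⟨t, p, q, hq, hR⟩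
  · exact Or.inl (hSS'.eq_zero hempty)
  · exact Or.inr ⟨t, p, q, hq, hR ▸ hSS'⟩

theorem shiftOps_subset_adjoin (hT : IsTruncShift P T) :
    shiftOps P ⊆ StarAlgebra.adjoin ℂ {S | ∃ p : P, S = T p} := by
  rw [← generators_eq_shiftOps hT]
  rintro _ ⟨p, q, r, -, rfl⟩
  have hT_mem : ∀ p, T p ∈ StarAlgebra.adjoin ℂ {S | ∃ p : P, S = T p} :=
    fun p => StarAlgebra.subset_adjoin ℂ _ ⟨p, rfl⟩
  rw [← ContinuousLinearMap.star_eq_adjoint]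
  exact mul_mem (hT_mem p) (mul_mem (star_mem (hT_mem q)) (hT_mem r))

end Operators

theorem span_TpTqTr_dense_general {P : Type*} [CancelMonoid P] (hP : IsLCMMonoid P)
    (T : P → (lp (fun _ : Delta P => ℂ) 2 →L[ℂ] lp (fun _ : Delta P => ℂ) 2))
    (hT : IsTruncShift P T) :
    closure ((Submodule.span ℂ
        {S | ∃ p q r : P, q ∈ lIdeal P p ∩ rIdeal P r ∧
          S = (T p).comp ((ContinuousLinearMap.adjoint (T q)).comp (T r))} :
        Submodule ℂ (lp (fun _ : Delta P => ℂ) 2 →L[ℂ] lp (fun _ : Delta P => ℂ) 2)) :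
        Set (lp (fun _ : Delta P => ℂ) 2 →L[ℂ] lp (fun _ : Delta P => ℂ) 2))
      = closure ((StarAlgebra.adjoin ℂ {S | ∃ p : P, S = T p} :
          StarSubalgebra ℂ (lp (fun _ : Delta P => ℂ) 2 →L[ℂ] lp (fun _ : Delta P => ℂ) 2)) :
          Set (lp (fun _ : Delta P => ℂ) 2 →L[ℂ] lp (fun _ : Delta P => ℂ) 2)) := by
  classical
  rw [generators_eq_shiftOps hT]
  congr 1
  refine span_eq_starAlgebraAdjoin ?_ (shiftOps_subset_adjoin hT) one_mem_shiftOps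
    (fun S hS S' hS' => mul_mem_shiftOps hP hS hS') fun S => star_mem_shiftOps
  rintro _ ⟨p, rfl⟩
  exact truncShift_mem_shiftOps hT p

/-- For a countable LCM monoid `P`, the closed linear span of
`{T_p (T_q)* T_r : q ∈ Pp ∩ rP}` equals the closed *-subalgebra of `B(ℓ²(Δ))` generated
by the truncated shifts `{T_p : p ∈ P}`, i.e. the C*-algebra `C*_ts(P, P^op)`. -/
theorem span_TpTqTr_dense {P : Type*} [CancelMonoid P] [Countable P] (hP : IsLCMMonoid P)
    (T : P → (lp (fun _ : Delta P => ℂ) 2 →L[ℂ] lp (fun _ : Delta P => ℂ) 2))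
    (hT : IsTruncShift P T) :
    closure ((Submodule.span ℂ
        {S | ∃ p q r : P, q ∈ lIdeal P p ∩ rIdeal P r ∧
          S = (T p).comp ((ContinuousLinearMap.adjoint (T q)).comp (T r))} :
        Submodule ℂ (lp (fun _ : Delta P => ℂ) 2 →L[ℂ] lp (fun _ : Delta P => ℂ) 2)) :
        Set (lp (fun _ : Delta P => ℂ) 2 →L[ℂ] lp (fun _ : Delta P => ℂ) 2))
      = closure ((StarAlgebra.adjoin ℂ {S | ∃ p : P, S = T p} :
          StarSubalgebra ℂ (lp (fun _ : Delta P => ℂ) 2 →L[ℂ] lp (fun _ : Delta P => ℂ) 2)) :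
          Set (lp (fun _ : Delta P => ℂ) 2 →L[ℂ] lp (fun _ : Delta P => ℂ) 2)) :=
  span_TpTqTr_dense_general hP T hT
end

section
/- Let X* be the free monoid on a set X and define h(p, q, r) = |q| − |p| − |r| for words p, q, r. (a) If p, q, r, a, b, c, a₁, q₁, r₁, b₁ ∈ X* satisfy r·a·a₁ = q·q₁ and r₁·r·a = b₁·b, then |r₁·r·a·a₁| − |p·q₁| − |b₁·c| = (|q| − |p| − |r|) + (|b| − |a| − |c|); that is, h is additive on nonzero products in S_{X*}. (b) If q ∈ X*p ∩ rX* and |q| = |p| + |r|, then q = rp; that is, h is idempotent pure. -/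
/-- For the free monoid `X*`, the map `h[p,q,r] = |q| - |p| - |r|` is a prehomomorphism
on `S_{X*}` which is additive on nonzero products, and is idempotent pure. -/
theorem freeMonoid_cocycle (X : Type*) :
    (∀ p q r a b c a₁ q₁ r₁ b₁ : FreeMonoid X,
      r * a * a₁ = q * q₁ → r₁ * (r * a) = b₁ * b →
      ((r₁ * r * a * a₁).length : ℤ) - ((p * q₁).length : ℤ) - ((b₁ * c).length : ℤ)
        = (((q.length : ℤ) - (p.length : ℤ) - (r.length : ℤ))
            + ((b.length : ℤ) - (a.length : ℤ) - (c.length : ℤ)))) ∧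
    (∀ p q r : FreeMonoid X, (∃ s, q = s * p) → (∃ t, q = r * t) →
      (q.length : ℤ) = (p.length : ℤ) + (r.length : ℤ) → q = r * p) := by
  constructor
  · intro p q r a b c a₁ q₁ r₁ b₁ h1 h2
    have l1 := congrArg FreeMonoid.length h1
    have l2 := congrArg FreeMonoid.length h2
    simp only [FreeMonoid.length_mul] at *
    omega
  · intro p q r ⟨s, hs⟩ ⟨t, ht⟩ hlen
    have hsl : s.length = r.length := by
      have := congrArg FreeMonoid.length hs
      have := congrArg FreeMonoid.length ht
      simp only [FreeMonoid.length_mul] at *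
      omega
    have : s.toList ++ p.toList = r.toList ++ t.toList := by
      have := hs.symm.trans ht
      simpa [FreeMonoid.toList_mul] using congrArg FreeMonoid.toList this
    have hst := List.append_inj this (by simpa [FreeMonoid.length] using hsl)
    have hpt : p.toList = t.toList := hst.2
    have : t = p := FreeMonoid.toList.injective hpt.symm
    rw [ht, this]
end

section
/- Let X be a set, G a group, (g, α) ↦ g·α a map G × X* → X* that is length preserving (|g·α| = |α| for all g, α), and (g, α) ↦ g|_α a map G × X* → G. Assume the pair is recurrent: for every h ∈ G and all words α, β with |α| = |β| there exists g ∈ G with g·α = β and g|_α = h. Define the Zappa–Szép multiplication on X* × G by (α, g)(β, h) = (α(g·β), (g|_β)h). Then for every (α, g) ∈ X* × G, the principal left ideal {(γ, k)(α, g) : (γ, k) ∈ X* × G} equals I_{|α|} := {(β, h) ∈ X* × G : |β| ≥ |α|}. In particular, the set of principal left ideals of X* ⋈ G is {I_n : n ∈ ℕ} and is linearly ordered by inclusion. -/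
/-!
Since the action preserves length, every element `(γ, k)(α, g) = (γ (k·α), (k|_α) g)` has first
coordinate of length at least `|α|`. Conversely, split a word `β` with `|β| ≥ |α|` as `β = γ δ`
with `|δ| = |α|`; recurrence gives `k` with `k·α = δ` and `k|_α = h g⁻¹`, so that
`(γ, k)(α, g) = (β, h)`. Hence every principal left ideal is some `I_n`, every `I_n` is principal
(`X` is nonempty, so words of every length exist), and the `I_n` form a chain.
-/

namespace FreeMonoid

theorem exists_eq_mul_length_eq {X : Type*} {β : FreeMonoid X} {n : ℕ} (hn : n ≤ β.length) :
    ∃ γ δ : FreeMonoid X, β = γ * δ ∧ δ.length = n := by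
  refine ⟨ofList (β.toList.take (β.length - n)), ofList (β.toList.drop (β.length - n)), ?_, ?_⟩
  · exact toList.injective (List.take_append_drop _ _).symm
  · change (β.toList.drop (β.length - n)).length = n
    rw [List.length_drop]
    change β.length - (β.length - n) = n
    omega

end FreeMonoid

section ZappaSzep

variable {X G : Type*} [Group G]
  (act : G → FreeMonoid X → FreeMonoid X) (res : G → FreeMonoid X → G)

def principalLeftIdeal (α : FreeMonoid X) (g : G) : Set (FreeMonoid X × G) :=
  {w | ∃ (γ : FreeMonoid X) (k : G), w = (γ * act k α, res k α * g)}

theorem principalLeftIdeal_subset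
    (hlen : ∀ (g : G) (α : FreeMonoid X), (act g α).length = α.length)
    (α : FreeMonoid X) (g : G) :
    principalLeftIdeal act res α g ⊆ {w | α.length ≤ w.1.length} := by
  rintro _ ⟨γ, k, rfl⟩
  simp only [Set.mem_ofPred_eq, FreeMonoid.length_mul, hlen]
  omega

theorem subset_principalLeftIdeal
    (hrec : ∀ (h : G) (α β : FreeMonoid X), α.length = β.length →
      ∃ g : G, act g α = β ∧ res g α = h)
    (α : FreeMonoid X) (g : G) :
    {w | α.length ≤ w.1.length} ⊆ principalLeftIdeal act res α g := by
  rintro ⟨β, h⟩ (hle : α.length ≤ β.length)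
  obtain ⟨γ, δ, rfl, hδ⟩ := FreeMonoid.exists_eq_mul_length_eq hle
  obtain ⟨k, hkα, hkres⟩ := hrec (h * g⁻¹) α δ hδ.symm
  exact ⟨γ, k, by rw [hkα, hkres, inv_mul_cancel_right]⟩

theorem principalLeftIdeal_eq
    (hlen : ∀ (g : G) (α : FreeMonoid X), (act g α).length = α.length)
    (hrec : ∀ (h : G) (α β : FreeMonoid X), α.length = β.length →
      ∃ g : G, act g α = β ∧ res g α = h)
    (α : FreeMonoid X) (g : G) :
    principalLeftIdeal act res α g = {w | α.length ≤ w.1.length} :=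
  (principalLeftIdeal_subset act res hlen α g).antisymm (subset_principalLeftIdeal act res hrec α g)

end ZappaSzep

/-- For a recurrent, length-preserving self-similar action `(G, X)`, every principal left
ideal of the Zappa–Szép product `X* ⋈ G` (with multiplication
`(α,g)(β,h) = (α(g·β), (g|_β)h)`) equals `I_{|α|} = {(β,h) : |β| ≥ |α|}`; consequently
the set of principal left ideals is `{I_n : n ∈ ℕ}` and is linearly ordered by
inclusion. -/
theorem zappaSzep_leftIdeals {X : Type*} [Nonempty X] {G : Type*} [Group G]
    (act : G → FreeMonoid X → FreeMonoid X) (res : G → FreeMonoid X → G)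
    (hlen : ∀ (g : G) (α : FreeMonoid X), (act g α).length = α.length)
    (hrec : ∀ (h : G) (α β : FreeMonoid X), α.length = β.length →
      ∃ g : G, act g α = β ∧ res g α = h) :
    (∀ (α : FreeMonoid X) (g : G),
      {w : FreeMonoid X × G | ∃ (γ : FreeMonoid X) (k : G), w = (γ * act k α, res k α * g)}
        = {w : FreeMonoid X × G | α.length ≤ w.1.length}) ∧
    ({S : Set (FreeMonoid X × G) | ∃ (α : FreeMonoid X) (g : G),
        S = {w | ∃ (γ : FreeMonoid X) (k : G), w = (γ * act k α, res k α * g)}}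
      = {S : Set (FreeMonoid X × G) | ∃ n : ℕ, S = {w | n ≤ w.1.length}}) ∧
    (∀ (α β : FreeMonoid X) (g h : G),
      {w : FreeMonoid X × G | ∃ (γ : FreeMonoid X) (k : G), w = (γ * act k α, res k α * g)}
        ⊆ {w | ∃ (γ : FreeMonoid X) (k : G), w = (γ * act k β, res k β * h)} ∨
      {w : FreeMonoid X × G | ∃ (γ : FreeMonoid X) (k : G), w = (γ * act k β, res k β * h)}
        ⊆ {w | ∃ (γ : FreeMonoid X) (k : G), w = (γ * act k α, res k α * g)}) := by
  have hideal := principalLeftIdeal_eq act res hlen hrec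
  refine ⟨hideal, ?_, fun α β g h => ?_⟩
  · ext S
    constructor
    · rintro ⟨α, g, rfl⟩
      exact ⟨α.length, hideal α g⟩
    · rintro ⟨n, rfl⟩
      obtain ⟨α, rfl⟩ := FreeMonoid.length_surjective (α := X) n
      exact ⟨α, 1, (hideal α 1).symm⟩
  · change principalLeftIdeal act res α g ⊆ principalLeftIdeal act res β h ∨
      principalLeftIdeal act res β h ⊆ principalLeftIdeal act res α g
    rw [hideal, hideal]
    rcases le_total α.length β.length with hαβ | hβα
    · exact .inr fun _ hw => hαβ.trans hw
    · exact .inl fun _ hw => hβα.trans hw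
end

section
/- Let E and F be meet-semilattices, each with a bottom element 0 and a top element 1. Identify the filters of the semilattice E ×₀ F with the subsets ξ ⊆ E × F that are nonempty, contain no pair with a zero coordinate, are upward closed with respect to the componentwise order, and are closed under componentwise meets. For such ξ set ξ_l = {e ∈ E : (e, f) ∈ ξ for some f} and ξ_r = {f ∈ F : (e, f) ∈ ξ for some e}. Then the map φ(ξ) = (ξ_l, ξ_r) is a bijection from the set of filters of E ×₀ F onto (filters of E) × (filters of F), with inverse (ξ, η) ↦ ξ × η; moreover, ξ is an ultrafilter (maximal filter) of E ×₀ F if and only if ξ_l and ξ_r are ultrafilters of E and F respectively. -/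
/-- A filter in a meet-semilattice with bottom element `0 = ⊥`: a nonempty subset not
containing `0`, upward closed and closed under meets. -/
def IsSLFilter {E : Type*} [SemilatticeInf E] [OrderBot E] (ξ : Set E) : Prop :=
  ξ.Nonempty ∧ ⊥ ∉ ξ ∧ (∀ e ∈ ξ, ∀ f : E, e ≤ f → f ∈ ξ) ∧ (∀ e ∈ ξ, ∀ f ∈ ξ, e ⊓ f ∈ ξ)

/-- An ultrafilter: a filter maximal with respect to inclusion. -/
def IsSLUltrafilter {E : Type*} [SemilatticeInf E] [OrderBot E] (ξ : Set E) : Prop :=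
  IsSLFilter ξ ∧ ∀ η : Set E, IsSLFilter η → ξ ⊆ η → η = ξ

/-- A filter of the semilattice `E ×₀ F`, identified with a subset of `E × F` which is
nonempty, contains no pair with a zero coordinate, is upward closed (componentwise) and is
closed under componentwise meets. -/
def IsProdFilter {E F : Type*} [SemilatticeInf E] [OrderBot E]
    [SemilatticeInf F] [OrderBot F] (ξ : Set (E × F)) : Prop :=
  ξ.Nonempty ∧ (∀ z ∈ ξ, z.1 ≠ ⊥ ∧ z.2 ≠ ⊥) ∧
    (∀ z ∈ ξ, ∀ w : E × F, z.1 ≤ w.1 → z.2 ≤ w.2 → w ∈ ξ) ∧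
    (∀ z ∈ ξ, ∀ w ∈ ξ, (z.1 ⊓ w.1, z.2 ⊓ w.2) ∈ ξ)

/-- An ultrafilter of `E ×₀ F`: a filter maximal with respect to inclusion. -/
def IsProdUltrafilter {E F : Type*} [SemilatticeInf E] [OrderBot E]
    [SemilatticeInf F] [OrderBot F] (ξ : Set (E × F)) : Prop :=
  IsProdFilter ξ ∧ ∀ η : Set (E × F), IsProdFilter η → ξ ⊆ η → η = ξ

/-- `ξ_l = {e ∈ E : (e,f) ∈ ξ for some f}`. -/
def projL {E F : Type*} (ξ : Set (E × F)) : Set E := {e | ∃ f, (e, f) ∈ ξ}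

/-- `ξ_r = {f ∈ F : (e,f) ∈ ξ for some e}`. -/
def projR {E F : Type*} (ξ : Set (E × F)) : Set F := {f | ∃ e, (e, f) ∈ ξ}

/-- For meet-semilattices `E`, `F` with bottom and top elements, `ξ ↦ (ξ_l, ξ_r)` is a
bijection from the filters of `E ×₀ F` onto pairs of filters of `E` and of `F`, with
inverse `(ξ, η) ↦ ξ × η`; it maps ultrafilters onto pairs of ultrafilters. -/
theorem prodSemilattice_filters {E F : Type*}
    [SemilatticeInf E] [OrderBot E] [OrderTop E]
    [SemilatticeInf F] [OrderBot F] [OrderTop F] :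
    (∀ ξ : Set (E × F), IsProdFilter ξ → IsSLFilter (projL ξ) ∧ IsSLFilter (projR ξ)) ∧
    (∀ (ξ : Set E) (η : Set F), IsSLFilter ξ → IsSLFilter η → IsProdFilter (ξ ×ˢ η)) ∧
    (∀ ξ : Set (E × F), IsProdFilter ξ → projL ξ ×ˢ projR ξ = ξ) ∧
    (∀ (ξ : Set E) (η : Set F), IsSLFilter ξ → IsSLFilter η →
      projL (ξ ×ˢ η) = ξ ∧ projR (ξ ×ˢ η) = η) ∧
    (∀ ξ : Set (E × F), IsProdFilter ξ →
      (IsProdUltrafilter ξ ↔ IsSLUltrafilter (projL ξ) ∧ IsSLUltrafilter (projR ξ))) := by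
  have h1 : ∀ ξ : Set (E × F), IsProdFilter ξ → IsSLFilter (projL ξ) ∧ IsSLFilter (projR ξ) := by
    rintro ξ ⟨⟨z, hz⟩, hnz, hup, hmeet⟩
    constructor
    · refine ⟨⟨z.1, z.2, hz⟩, ?_, ?_, ?_⟩
      · rintro ⟨f, hf⟩; exact (hnz _ hf).1 rfl
      · rintro e ⟨f, hf⟩ e' he'
        exact ⟨f, hup _ hf (e', f) he' le_rfl⟩
      · rintro e ⟨f, hf⟩ e' ⟨f', hf'⟩
        exact ⟨f ⊓ f', hmeet _ hf _ hf'⟩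
    · refine ⟨⟨z.2, z.1, hz⟩, ?_, ?_, ?_⟩
      · rintro ⟨e, he⟩; exact (hnz _ he).2 rfl
      · rintro f ⟨e, he⟩ f' hf'
        exact ⟨e, hup _ he (e, f') le_rfl hf'⟩
      · rintro f ⟨e, he⟩ f' ⟨e', he'⟩
        exact ⟨e ⊓ e', hmeet _ he _ he'⟩
  have h2 : ∀ (ξ : Set E) (η : Set F), IsSLFilter ξ → IsSLFilter η → IsProdFilter (ξ ×ˢ η) := by
    rintro ξ η ⟨⟨a, ha⟩, hbξ, hupξ, hmξ⟩ ⟨⟨b, hb⟩, hbη, hupη, hmη⟩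
    refine ⟨⟨(a, b), ha, hb⟩, ?_, ?_, ?_⟩
    · rintro z ⟨hz1, hz2⟩
      exact ⟨fun h => hbξ (h ▸ hz1), fun h => hbη (h ▸ hz2)⟩
    · rintro z ⟨hz1, hz2⟩ w hw1 hw2
      exact ⟨hupξ _ hz1 _ hw1, hupη _ hz2 _ hw2⟩
    · rintro z ⟨hz1, hz2⟩ w ⟨hw1, hw2⟩
      exact ⟨hmξ _ hz1 _ hw1, hmη _ hz2 _ hw2⟩
  have h3 : ∀ ξ : Set (E × F), IsProdFilter ξ → projL ξ ×ˢ projR ξ = ξ := by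
    rintro ξ ⟨hne, hnz, hup, hmeet⟩
    ext ⟨e, f⟩
    constructor
    · rintro ⟨⟨f', hf'⟩, ⟨e', he'⟩⟩
      exact hup _ (hmeet _ hf' _ he') (e, f) inf_le_left inf_le_right
    · intro h; exact ⟨⟨f, h⟩, ⟨e, h⟩⟩
  have h4 : ∀ (ξ : Set E) (η : Set F), IsSLFilter ξ → IsSLFilter η →
      projL (ξ ×ˢ η) = ξ ∧ projR (ξ ×ˢ η) = η := by
    rintro ξ η ⟨⟨a, ha⟩, _, _, _⟩ ⟨⟨b, hb⟩, _, _, _⟩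
    constructor
    · ext e; exact ⟨fun ⟨f, hf⟩ => hf.1, fun he => ⟨b, he, hb⟩⟩
    · ext f; exact ⟨fun ⟨e, he⟩ => he.2, fun hf => ⟨a, ha, hf⟩⟩
  refine ⟨h1, h2, h3, h4, ?_⟩
  intro ξ hξ
  obtain ⟨hL, hR⟩ := h1 ξ hξ
  constructor
  · rintro ⟨hf, hmax⟩
    constructor
    · refine ⟨hL, fun η hη hsub => ?_⟩
      have hηR := h2 η (projR ξ) hη hR
      have hsub2 : ξ ⊆ η ×ˢ projR ξ := by
        rintro ⟨e, f⟩ hz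
        exact ⟨hsub ⟨f, hz⟩, ⟨e, hz⟩⟩
      have key := hmax _ hηR hsub2
      have h := (h4 η (projR ξ) hη hR).1
      rw [key] at h
      exact h.symm
    · refine ⟨hR, fun η hη hsub => ?_⟩
      have hηL := h2 (projL ξ) η hL hη
      have hsub2 : ξ ⊆ projL ξ ×ˢ η := by
        rintro ⟨e, f⟩ hz
        exact ⟨⟨f, hz⟩, hsub ⟨e, hz⟩⟩
      have key := hmax _ hηL hsub2
      have h := (h4 (projL ξ) η hL hη).2
      rw [key] at h
      exact h.symm
  · rintro ⟨⟨_, hmaxL⟩, ⟨_, hmaxR⟩⟩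
    refine ⟨hξ, fun η hη hsub => ?_⟩
    obtain ⟨hηL, hηR⟩ := h1 η hη
    have subL : projL ξ ⊆ projL η := fun e ⟨f, hf⟩ => ⟨f, hsub hf⟩
    have subR : projR ξ ⊆ projR η := fun f ⟨e, he⟩ => ⟨e, hsub he⟩
    have eL := hmaxL _ hηL subL
    have eR := hmaxR _ hηR subR
    rw [← h3 η hη, eL, eR, h3 ξ hξ]
end
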